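/- If Γ is a finite well-bounded partition of ℚ and Ω is a well-bounded partition of ℚ with infinitely many elements in some Ω_N (an infinite well-bounded partition), then τ_Γ is strictly coarser than τ_Ω. -/

import Mathlib

open scoped Classical

/-- The Hahn field `𝓕` of maps `ℚ → ℝ` with well-ordered support. -/
noncomputable abbrev F := HahnSeries ℚ ℝ

/-- A subset `A` of `ℚ` is well-bounded if every nonempty subset of `A`
has a maximum element. -/
def WellBoundedSet (A : Set ℚ) : Prop :=
  ∀ S ⊆ A, S.Nonempty → ∃ m ∈ S, ∀ a ∈ S, a ≤ m

/-- A well-bounded partition of `ℚ`: a countable family of mutually disjoint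
well-bounded sets whose union is all of `ℚ`. -/
def IsWBPartition (γ : ℕ → Set ℚ) : Prop :=
  Pairwise (Function.onFun Disjoint γ) ∧ (∀ i, WellBoundedSet (γ i)) ∧
    (⋃ i, γ i) = Set.univ

/-- A finite well-bounded partition of `ℚ`: each piece is moreover finite. -/
def IsFinWBPartition (γ : ℕ → Set ℚ) : Prop :=
  IsWBPartition γ ∧ ∀ i, (γ i).Finite

/-- `Γ_n`, the union of the first `n` pieces of the partition. -/
def Gam (γ : ℕ → Set ℚ) (n : ℕ) : Set ℚ := ⋃ i < n, γ i

/-- The semi-norm `‖x‖_{Γ,n} = max {|x[q]| : q ∈ Γ_n}` induced by a well-bounded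
partition `Γ` of `ℚ` (realized as a supremum together with `0`). -/
noncomputable def gnorm (γ : ℕ → Set ℚ) (n : ℕ) (x : F) : ℝ :=
  sSup (insert 0 ((fun q => |x.coeff q|) '' Gam γ n))

/-- `μ(r) = ⌈1/r⌉`. -/
noncomputable def mu (r : ℝ) : ℕ := ⌈1 / r⌉₊

/-- The pseudo-ball `B_Γ(x, r) = {y | ‖x − y‖_{Γ,μ(r)} < r}`. -/
def PB (γ : ℕ → Set ℚ) (x : F) (r : ℝ) : Set F :=
  {y : F | gnorm γ (mu r) (x - y) < r}

/-- The topology `τ_Γ` induced by the semi-norms of the partition `Γ`, as the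
collection of its open sets. -/
def Top' (γ : ℕ → Set ℚ) : Set (Set F) :=
  {O : Set F | ∀ x ∈ O, ∃ r : ℝ, 0 < r ∧ PB γ x r ⊆ O}

/-! A well-ordered support meets a well-bounded set in finitely many points, so each semi-norm
`‖x‖_{P,n}` is a maximum of finitely many values `|x[q]|`. Since `Γ` is finite, each `Γ_n` is a
finite set of rationals and therefore lies in some `Ω_M`: every `τ_Γ`-pseudo-ball contains a
`τ_Ω`-pseudo-ball. Conversely, if `Ω_N` is infinite, a `τ_Γ`-ball around `x` only constrains the
coefficients on the finite set `Γ_m`; changing `x` by `r` at a point of `Ω_N \ Γ_m` stays in it,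
but leaves the `τ_Ω`-ball of radius `r ≤ 1/(N+1)`, whose semi-norm sees all of `Ω_N`. -/

theorem WellBoundedSet.wellFoundedOn_gt {A : Set ℚ} (hA : WellBoundedSet A) :
    A.WellFoundedOn (· > ·) := by
  rw [Set.wellFoundedOn_iff, WellFounded.wellFounded_iff_has_min]
  rintro S ⟨x, hx⟩
  by_cases hSA : (S ∩ A).Nonempty
  · obtain ⟨m, hm, hmax⟩ := hA (S ∩ A) Set.inter_subset_right hSA
    exact ⟨m, hm.1, fun a ha ⟨hlt, haA, _⟩ => (hmax a ⟨ha, haA⟩).not_gt hlt⟩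
  · exact ⟨x, hx, fun a _ ⟨_, _, hxA⟩ => hSA ⟨x, hx, hxA⟩⟩

theorem Set.Finite.wellBoundedSet {A : Set ℚ} (hA : A.Finite) : WellBoundedSet A :=
  fun S hS hne => S.exists_max_image id (hA.subset hS) hne

theorem Set.IsWF.finite_inter_of_wellFoundedOn_gt {α : Type*} [LinearOrder α] {A B : Set α}
    (hA : A.IsWF) (hB : B.WellFoundedOn (· > ·)) : (A ∩ B).Finite := by
  have : WellFoundedLT ↥(A ∩ B) := ⟨hA.mono Set.inter_subset_left⟩
  have : WellFoundedGT ↥(A ∩ B) := ⟨hB.subset Set.inter_subset_right⟩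
  have := Finite.of_wellFoundedLT_wellFoundedGT ↥(A ∩ B)
  exact Set.toFinite _

theorem gam_eq_biUnion_range (Ω : ℕ → Set ℚ) (n : ℕ) :
    Gam Ω n = ⋃ i ∈ Finset.range n, Ω i := by
  simp [Gam]

theorem gam_mono (Ω : ℕ → Set ℚ) : Monotone (Gam Ω) :=
  fun _ _ hmn => Set.iUnion₂_mono' fun i hi => ⟨i, hi.trans_le hmn, subset_rfl⟩

theorem finite_gam {γ : ℕ → Set ℚ} (hγ : ∀ i, (γ i).Finite) (n : ℕ) : (Gam γ n).Finite :=
  (Set.finite_lt_nat n).biUnion fun i _ => hγ i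

theorem wellFoundedOn_gt_gam {Ω : ℕ → Set ℚ} (hΩ : ∀ i, WellBoundedSet (Ω i)) (n : ℕ) :
    (Gam Ω n).WellFoundedOn (· > ·) := by
  rw [gam_eq_biUnion_range, Finset.wellFoundedOn_bUnion]
  exact fun i _ => (hΩ i).wellFoundedOn_gt

theorem exists_subset_gam {Ω : ℕ → Set ℚ} (hΩ : ⋃ i, Ω i = Set.univ) {S : Set ℚ}
    (hS : S.Finite) : ∃ M, S ⊆ Gam Ω M := by
  have hcover : ((hS.toFinset : Finset ℚ) : Set ℚ) ⊆ ⋃ M, Gam Ω M := fun q _ => by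
    obtain ⟨i, hi⟩ := Set.mem_iUnion.1 (hΩ ▸ Set.mem_univ q)
    exact Set.mem_iUnion.2 ⟨i + 1, Set.mem_biUnion (Nat.lt_succ_self i) hi⟩
  simpa using (gam_mono Ω).directed_le.exists_mem_subset_of_finset_subset_biUnion hcover

section Seminorm

variable {Ω : ℕ → Set ℚ}

theorem finite_gnorm_set (hΩ : ∀ i, WellBoundedSet (Ω i)) (n : ℕ) (z : F) :
    (insert 0 ((fun q => |z.coeff q|) '' Gam Ω n)).Finite := by
  have hsupp := z.isWF_support.finite_inter_of_wellFoundedOn_gt (wellFoundedOn_gt_gam hΩ n)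
  refine ((hsupp.image fun q => |z.coeff q|).insert 0).subset ?_
  rintro _ (rfl | ⟨q, hq, rfl⟩)
  · exact Set.mem_insert _ _
  · by_cases hz : z.coeff q = 0
    · simp [hz]
    · exact Set.mem_insert_of_mem _ ⟨q, ⟨hz, hq⟩, rfl⟩

theorem gnorm_le_iff (hΩ : ∀ i, WellBoundedSet (Ω i)) {n : ℕ} {z : F} {c : ℝ} :
    gnorm Ω n z ≤ c ↔ 0 ≤ c ∧ ∀ q ∈ Gam Ω n, |z.coeff q| ≤ c := by
  rw [gnorm, csSup_le_iff (finite_gnorm_set hΩ n z).bddAbove (Set.insert_nonempty _ _)]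
  simp

theorem gnorm_lt_iff (hΩ : ∀ i, WellBoundedSet (Ω i)) {n : ℕ} {z : F} {c : ℝ} :
    gnorm Ω n z < c ↔ 0 < c ∧ ∀ q ∈ Gam Ω n, |z.coeff q| < c := by
  rw [gnorm, (finite_gnorm_set hΩ n z).csSup_lt_iff (Set.insert_nonempty _ _)]
  simp

theorem gnorm_nonneg (hΩ : ∀ i, WellBoundedSet (Ω i)) (n : ℕ) (z : F) : 0 ≤ gnorm Ω n z :=
  ((gnorm_le_iff hΩ).1 le_rfl).1

theorem abs_coeff_le_gnorm (hΩ : ∀ i, WellBoundedSet (Ω i)) {n : ℕ} {q : ℚ}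
    (hq : q ∈ Gam Ω n) (z : F) : |z.coeff q| ≤ gnorm Ω n z :=
  ((gnorm_le_iff hΩ).1 le_rfl).2 q hq

theorem gnorm_mono (hΩ : ∀ i, WellBoundedSet (Ω i)) {m n : ℕ} (hmn : m ≤ n) (z : F) :
    gnorm Ω m z ≤ gnorm Ω n z :=
  (gnorm_le_iff hΩ).2
    ⟨gnorm_nonneg hΩ n z, fun _ hq => abs_coeff_le_gnorm hΩ (gam_mono Ω hmn hq) z⟩

theorem gnorm_sub_le_add (hΩ : ∀ i, WellBoundedSet (Ω i)) (n : ℕ) (x y z : F) :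
    gnorm Ω n (x - z) ≤ gnorm Ω n (x - y) + gnorm Ω n (y - z) := by
  refine (gnorm_le_iff hΩ).2 ⟨add_nonneg (gnorm_nonneg hΩ n _) (gnorm_nonneg hΩ n _),
    fun q hq => ?_⟩
  calc |(x - z).coeff q| ≤ |(x - y).coeff q| + |(y - z).coeff q| := by
        simpa only [HahnSeries.coeff_sub] using abs_sub_le _ _ _
    _ ≤ _ := add_le_add (abs_coeff_le_gnorm hΩ hq _) (abs_coeff_le_gnorm hΩ hq _)

theorem mem_PB_self (hΩ : ∀ i, WellBoundedSet (Ω i)) (x : F) {r : ℝ} (hr : 0 < r) :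
    x ∈ PB Ω x r :=
  (gnorm_lt_iff hΩ).2 ⟨hr, fun _ _ => by simpa using hr⟩

end Seminorm

theorem mu_le_mu {r r' : ℝ} (hr : 0 < r) (hrr' : r ≤ r') : mu r' ≤ mu r :=
  Nat.ceil_le_ceil (one_div_le_one_div_of_le hr hrr')

theorem le_mu {r : ℝ} {M : ℕ} (hr : 0 < r) (hrM : r ≤ 1 / (M + 1)) : M ≤ mu r := by
  have hM : (M : ℝ) + 1 ≤ 1 / r := by
    simpa using one_div_le_one_div_of_le hr hrM
  exact (Nat.lt_ceil.2 (by linarith)).le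

theorem PB_subset_PB {γ Ω : ℕ → Set ℚ} (hγ : ∀ i, WellBoundedSet (γ i))
    (hΩ : ∀ i, WellBoundedSet (Ω i)) {r r' : ℝ} (hr : 0 < r) (hr'r : r' ≤ r)
    (hsub : Gam γ (mu r) ⊆ Gam Ω (mu r')) (x : F) : PB Ω x r' ⊆ PB γ x r :=
  fun _ hy => (gnorm_lt_iff hγ).2
    ⟨hr, fun _ hq => (abs_coeff_le_gnorm hΩ (hsub hq) _).trans_lt (hy.trans_le hr'r)⟩

theorem PB_mem_Top' {Ω : ℕ → Set ℚ} (hΩ : ∀ i, WellBoundedSet (Ω i)) (x : F) {r : ℝ}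
    (hr : 0 < r) : PB Ω x r ∈ Top' Ω := by
  intro y (hy : gnorm Ω (mu r) (x - y) < r)
  set s := gnorm Ω (mu r) (x - y)
  have hr' : 0 < min (r - s) r := lt_min (by linarith) hr
  refine ⟨min (r - s) r, hr', fun z (hz : gnorm Ω _ (y - z) < _) => ?_⟩
  calc gnorm Ω (mu r) (x - z) ≤ s + gnorm Ω (mu r) (y - z) := gnorm_sub_le_add hΩ _ x y z
    _ ≤ s + gnorm Ω (mu (min (r - s) r)) (y - z) := by
        gcongr; exact gnorm_mono hΩ (mu_le_mu hr' (min_le_right _ _)) _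
    _ < s + min (r - s) r := by gcongr
    _ ≤ r := by linarith [min_le_left (r - s) r]

theorem Top'_subset_Top' {γ Ω : ℕ → Set ℚ} (hγ : IsFinWBPartition γ) (hΩ : IsWBPartition Ω) :
    Top' γ ⊆ Top' Ω := by
  intro O hO x hx
  obtain ⟨r, hr, hball⟩ := hO x hx
  obtain ⟨M, hM⟩ := exists_subset_gam hΩ.2.2 (finite_gam hγ.2 (mu r))
  set r' := min r (1 / (M + 1))
  have hr' : 0 < r' := lt_min hr (by positivity)
  have hsub : Gam γ (mu r) ⊆ Gam Ω (mu r') :=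
    hM.trans (gam_mono Ω (le_mu hr' (min_le_right _ _)))
  exact ⟨r', hr', (PB_subset_PB hγ.1.2.1 hΩ.2.1 hr (min_le_left _ _) hsub x).trans hball⟩

theorem PB_notMem_Top' {γ Ω : ℕ → Set ℚ} (hγ : ∀ i, (γ i).Finite)
    (hΩ : ∀ i, WellBoundedSet (Ω i)) {N : ℕ} (hN : (Gam Ω N).Infinite) (x : F) {r : ℝ}
    (hr : 0 < r) (hNr : N ≤ mu r) : PB Ω x r ∉ Top' γ := by
  intro hO
  obtain ⟨r', hr', hball⟩ := hO x (mem_PB_self hΩ x hr)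
  obtain ⟨q, hqΩ, hqγ⟩ := (hN.sdiff (finite_gam hγ (mu r'))).nonempty
  have hy : x - HahnSeries.single q r ∈ PB γ x r' := by
    refine (gnorm_lt_iff fun i => (hγ i).wellBoundedSet).2 ⟨hr', fun p hp => ?_⟩
    have hpq : p ≠ q := fun h => hqγ (h ▸ hp)
    simpa [HahnSeries.coeff_single_of_ne hpq] using hr'
  have hy' : x - HahnSeries.single q r ∉ PB Ω x r := by
    have hq := abs_coeff_le_gnorm hΩ (gam_mono Ω hNr hqΩ) (HahnSeries.single q r)
    rw [HahnSeries.coeff_single_same, abs_of_pos hr] at hq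
    simpa [PB] using hq
  exact hy' (hball hy)

/-- If `Γ` is a finite well-bounded partition of `ℚ` and `Ω` is an infinite
well-bounded partition (some `Ω_N` is an infinite set), then `τ_Γ` is strictly
coarser than `τ_Ω`. -/
theorem finite_partition_topology_strictly_coarser
    (γ Ω : ℕ → Set ℚ) (hγ : IsFinWBPartition γ) (hΩ : IsWBPartition Ω)
    (hinf : ∃ N : ℕ, (Gam Ω N).Infinite) :
    Top' γ ⊆ Top' Ω ∧ ∃ O ∈ Top' Ω, O ∉ Top' γ := by
  refine ⟨Top'_subset_Top' hγ hΩ, ?_⟩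
  obtain ⟨N, hN⟩ := hinf
  have hr : (0 : ℝ) < 1 / (N + 1) := by positivity
  exact ⟨PB Ω 0 (1 / (N + 1)), PB_mem_Top' hΩ.2.1 0 hr,
    PB_notMem_Top' hγ.2 hΩ.2.1 hN 0 hr (le_mu hr le_rfl)⟩
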